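/- If the root system is simply-laced, then for every positive root α one has ℓ(s_α) = ⟨2ρ, α∨⟩ − 1. -/

import Mathlib

open Finset

noncomputable section

/-- A root system is a root pairing for which the roots span their ambient module
(the meaning of Mathlib's former `RootSystem`). -/
structure RootSystem (ι R M N : Type*) [CommRing R] [AddCommGroup M] [Module R M]
    [AddCommGroup N] [Module R N] extends RootPairing ι R M N where
  span_eq_top : Submodule.span R (Set.range root) = ⊤

namespace QBG

variable {ι V V' : Type*} [Fintype ι] [AddCommGroup V] [Module ℝ V]
  [AddCommGroup V'] [Module ℝ V']

variable (P : RootSystem ι ℝ V V') (f : V →ₗ[ℝ] ℝ)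

/-- `k` indexes a positive root (w.r.t. the regular linear functional `f`). -/
def Pos (k : ι) : Prop := 0 < f (P.root k)

/-- `k` indexes a simple root: positive and not a sum of two positive roots. -/
def IsSimple (k : ι) : Prop := Pos P f k ∧
  ¬ ∃ i j : ι, Pos P f i ∧ Pos P f j ∧ P.root k = P.root i + P.root j

/-- The reflection `s_α` associated to the root indexed by `k`. -/
def refl (k : ι) : V ≃ₗ[ℝ] V := P.reflection k

/-- `l` is a word in simple reflections with product `w`. -/
def Wrd (w : V ≃ₗ[ℝ] V) (l : List ι) : Prop :=
  (∀ i ∈ l, IsSimple P f i) ∧ (l.map (refl P)).prod = w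

/-- `w` lies in the Weyl group (generated by simple reflections). -/
def InW (w : V ≃ₗ[ℝ] V) : Prop := ∃ l, Wrd P f w l

/-- Coxeter length of `w` with respect to the simple reflections. -/
def len (w : V ≃ₗ[ℝ] V) : ℕ := sInf {n | ∃ l, Wrd P f w l ∧ l.length = n}

/-- The pairing `⟨2ρ, α_k^∨⟩` where `ρ` is the half-sum of positive roots. -/
def tworho (k : ι) : ℝ := ∑ i, if 0 < f (P.root i) then P.pairing i k else 0

/-- An upward edge of the quantum Bruhat graph, from `w`, labeled `k`. -/
def UpStep (w : V ≃ₗ[ℝ] V) (k : ι) : Prop :=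
  Pos P f k ∧ len P f (w * refl P k) = len P f w + 1

/-- A downward edge of the quantum Bruhat graph, from `w`, labeled `k`. -/
def DownStep (w : V ≃ₗ[ℝ] V) (k : ι) : Prop :=
  Pos P f k ∧ (len P f (w * refl P k) : ℝ) = (len P f w : ℝ) - tworho P f k + 1

/-- An edge of the quantum Bruhat graph, from `w`, labeled `k`. -/
def Step (w : V ≃ₗ[ℝ] V) (k : ι) : Prop := UpStep P f w k ∨ DownStep P f w k

/-- `ks` is the list of labels of a directed path in the quantum Bruhat graph
starting at `w`. -/
def ValidPath : (V ≃ₗ[ℝ] V) → List ι → Prop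
  | _, [] => True
  | w, k :: ks => Step P f w k ∧ ValidPath (w * refl P k) ks

/-- `ks` is the list of labels of an all-downward path starting at `w`. -/
def DownPath : (V ≃ₗ[ℝ] V) → List ι → Prop
  | _, [] => True
  | w, k :: ks => DownStep P f w k ∧ DownPath (w * refl P k) ks

/-- `ks` is the list of labels of an all-upward path starting at `w`. -/
def UpPath : (V ≃ₗ[ℝ] V) → List ι → Prop
  | _, [] => True
  | w, k :: ks => UpStep P f w k ∧ UpPath (w * refl P k) ks

/-- The endpoint of the path starting at `w` with edge labels `ks`. -/
def pathEnd (w : V ≃ₗ[ℝ] V) (ks : List ι) : V ≃ₗ[ℝ] V := w * (ks.map (refl P)).prod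

/-- The distance `d_Γ(u,v)` in the quantum Bruhat graph. -/
def dist (u v : V ≃ₗ[ℝ] V) : ℕ :=
  sInf {n | ∃ ks, ValidPath P f u ks ∧ pathEnd P u ks = v ∧ ks.length = n}

/-- The all-downward distance `d_↓(w)` from `w` to the identity. -/
def ddown (w : V ≃ₗ[ℝ] V) : ℕ :=
  sInf {n | ∃ ks, DownPath P f w ks ∧ pathEnd P w ks = 1 ∧ ks.length = n}

open Classical in
/-- The pairing of `2ρ` with the weight of the path `(w, ks)`, i.e. the sum of
`⟨2ρ, α^∨⟩` over the downward edges of the path. -/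
def downWeight : (V ≃ₗ[ℝ] V) → List ι → ℝ
  | _, [] => 0
  | w, k :: ks =>
      (if UpStep P f w k then 0 else tworho P f k) + downWeight (w * refl P k) ks

/-- `w` contains `v`: `w = u * v * u'` length-additively. -/
def Contains (w v : V ≃ₗ[ℝ] V) : Prop :=
  ∃ u u', InW P f u ∧ InW P f u' ∧ w = u * v * u' ∧
    len P f w = len P f u + len P f v + len P f u'

/-- `w` is small-height-avoiding: it contains no non-simple reflection `s_β`
with `ℓ(s_β) = ⟨2ρ, β^∨⟩ - 1`. -/
def SmallHeightAvoiding (w : V ≃ₗ[ℝ] V) : Prop :=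
  ¬ ∃ k : ι, Pos P f k ∧ ¬ IsSimple P f k ∧
      (len P f (refl P k) : ℝ) = tworho P f k - 1 ∧ Contains P f w (refl P k)

/-- The root system `P` is reduced. -/
def Reduced : Prop := ∀ i j : ι, P.root i ≠ (2 : ℝ) • P.root j

/-- The linear functional `f` is regular: it vanishes on no root. -/
def Regular : Prop := ∀ i : ι, f (P.root i) ≠ 0


end QBG

/-!
Both sides count the inversions of `s_α`, the positive roots it makes negative. In the
simply-laced case an inverted `β ≠ α` has `⟨β, α^∨⟩ = 1`, while `s_α` permutes the other positive
roots and negates their pairing with `α^∨`; hence `⟨2ρ, α^∨⟩` is one more than the number of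
inversions. A simple reflection permutes the positive roots other than its own, so a word of
length `n` has at most `n` inversions, which bounds `ℓ(s_α)` from below. Conversely, a non-simple
positive root `α` has a simple `γ` with `⟨α, γ^∨⟩ = 1`; then `β = α - γ` is a lower positive root,
`s_α = s_γ s_β s_γ` and `⟨2ρ, α^∨⟩ = ⟨2ρ, β^∨⟩ + 2`, and induction gives a word for `s_α` of
length `⟨2ρ, α^∨⟩ - 1`.
-/

open RootPairing

theorem RootPairing.pairing_cases_of_pairing_symm
    {ι R M N : Type*} [Finite ι] [Field R] [CharZero R] [AddCommGroup M] [Module R M]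
    [AddCommGroup N] [Module R N] (P : RootPairing ι R M N) [P.IsCrystallographic]
    (hSL : ∀ i j, P.pairing i j = P.pairing j i) (i j : ι) :
    P.pairing i j = 0 ∨ P.pairing i j = 1 ∨ P.pairing i j = -1 ∨ i = j ∨
      P.root i = -P.root j := by
  have hsymm : P.pairingIn ℤ i j = P.pairingIn ℤ j i :=
    FaithfulSMul.algebraMap_injective ℤ R <| by simp only [algebraMap_pairingIn, hSL]
  have hmem := P.pairingIn_pairingIn_mem_set_of_isCrystallographic i j
  rw [← hsymm] at hmem
  rw [← P.algebraMap_pairingIn ℤ, ← P.pairingIn_two_two_iff ℤ, ← P.pairingIn_neg_two_neg_two_iff ℤ,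
    ← hsymm]
  simp only [Set.mem_insert_iff, Set.mem_singleton_iff, Prod.mk.injEq] at hmem
  aesop

namespace QBG

variable {ι V V' : Type*} [AddCommGroup V] [Module ℝ V] [AddCommGroup V'] [Module ℝ V']
  {P : RootSystem ι ℝ V V'} {f : V →ₗ[ℝ] ℝ}

theorem pos_or_pos_reflectionPerm_self (hreg : Regular P f) (i : ι) :
    Pos P f i ∨ Pos P f (P.reflectionPerm i i) := by
  simp only [Pos, root_reflectionPerm, reflection_apply_self, map_neg, neg_pos]
  exact (hreg i).lt_or_gt.symm

theorem not_pos_reflectionPerm_self {i : ι} (hi : Pos P f i) :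
    ¬ Pos P f (P.reflectionPerm i i) := by
  simp only [Pos, root_reflectionPerm, reflection_apply_self, map_neg, neg_pos, not_lt]
  exact hi.le

theorem pos_induction [Finite ι] {motive : (k : ι) → Pos P f k → Prop}
    (ih : ∀ k (hk : Pos P f k),
      (∀ j (hj : Pos P f j), f (P.root j) < f (P.root k) → motive j hj) → motive k hk)
    (k : ι) (hk : Pos P f k) : motive k hk :=
  (Finite.wellFounded_of_trans_of_irrefl fun i j : ι => f (P.root i) < f (P.root j)).induction
    (C := fun k => ∀ hk, motive k hk) k (fun k ihk hk => ih k hk fun j hj hjk => ihk j hjk hj) hk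

theorem exists_sum_isSimple_eq_root [Finite ι] {k : ι} (hk : Pos P f k) :
    ∃ L : List ι, (∀ γ ∈ L, IsSimple P f γ) ∧ (L.map P.root).sum = P.root k := by
  induction k, hk using pos_induction with
  | ih k hk ih =>
    by_cases hs : IsSimple P f k
    · exact ⟨[k], by simpa using hs, by simp⟩
    obtain ⟨i, j, hi, hj, hkij⟩ :
        ∃ i j, Pos P f i ∧ Pos P f j ∧ P.root k = P.root i + P.root j := by
      by_contra h
      exact hs ⟨hk, h⟩
    have hfk : f (P.root k) = f (P.root i) + f (P.root j) := by rw [hkij, map_add]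
    obtain ⟨Li, hLi, hsumi⟩ := ih i hi (by unfold Pos at hj; linarith)
    obtain ⟨Lj, hLj, hsumj⟩ := ih j hj (by unfold Pos at hi; linarith)
    refine ⟨Li ++ Lj, fun γ hγ => ?_, by simp [hsumi, hsumj, hkij]⟩
    rcases List.mem_append.mp hγ with hγ | hγ
    exacts [hLi γ hγ, hLj γ hγ]

theorem tworho_reflectionPerm_self [Fintype ι] (k : ι) :
    tworho P f (P.reflectionPerm k k) = - tworho P f k := by
  simp [tworho, ← sum_neg_distrib, apply_ite]

variable (P f) in
def inversions [Fintype ι] (w : V ≃ₗ[ℝ] V) : Finset ι :=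
  univ.filter fun i => 0 < f (P.root i) ∧ f (w (P.root i)) < 0

@[simp]
theorem mem_inversions [Fintype ι] {w : V ≃ₗ[ℝ] V} {i : ι} :
    i ∈ inversions P f w ↔ 0 < f (P.root i) ∧ f (w (P.root i)) < 0 := by
  simp [inversions]

theorem inversions_one [Fintype ι] : inversions P f 1 = ∅ := by
  ext i
  simp only [mem_inversions, LinearEquiv.coe_one, id_eq, notMem_empty, iff_false, not_and, not_lt]
  exact le_of_lt

theorem len_le_length {w : V ≃ₗ[ℝ] V} {l : List ι} (hl : Wrd P f w l) : len P f w ≤ l.length :=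
  Nat.sInf_le ⟨l, hl, rfl⟩

theorem sum_pairing_noninversions_refl_eq_zero [Fintype ι] (hreg : Regular P f) (k : ι) :
    ∑ i ∈ univ.filter (fun i => 0 < f (P.root i) ∧ ¬ f (refl P k (P.root i)) < 0),
      P.pairing i k = 0 := by
  set N := univ.filter fun i => 0 < f (P.root i) ∧ ¬ f (refl P k (P.root i)) < 0
  have hmemN : ∀ i, i ∈ N ↔ 0 < f (P.root i) ∧ 0 < f (P.root (P.reflectionPerm k i)) := by
    intro i
    have := hreg (P.reflectionPerm k i)
    simp only [N, mem_filter, mem_univ, true_and, refl, root_reflectionPerm, not_lt] at this ⊢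
    exact and_congr_right fun _ => this.symm.le_iff_lt
  have h : ∑ i ∈ N, P.pairing i k = ∑ i ∈ N, -P.pairing i k :=
    sum_equiv (P.reflectionPerm k)
      (fun i => by rw [hmemN, hmemN, reflectionPerm_self, and_comm])
      fun i _ => by rw [← pairing_reflectionPerm, pairing_reflectionPerm_self_right, neg_neg]
  rw [sum_neg_distrib] at h
  linarith

section SimplyLaced

variable [P.IsCrystallographic]

theorem pos_reflectionPerm_of_isSimple [Finite ι] (hreg : Regular P f)
    (hSL : ∀ i j, P.pairing i j = P.pairing j i) {γ i : ι} (hγ : IsSimple P f γ)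
    (hi : Pos P f i) (hne : i ≠ γ) : Pos P f (P.reflectionPerm γ i) := by
  have hroot : P.root (P.reflectionPerm γ i) = P.root i - P.pairing i γ • P.root γ := by
    rw [root_reflectionPerm, reflection_apply_root]
  have hγpos : 0 < f (P.root γ) := hγ.1
  have hipos : 0 < f (P.root i) := hi
  rcases P.pairing_cases_of_pairing_symm hSL i γ with h | h | h | h | h
  · simpa [Pos, hroot, h] using hi
  · -- otherwise `γ = i + (γ - i)` would be a sum of two positive roots
    refine (pos_or_pos_reflectionPerm_self hreg _).resolve_right fun hneg =>
      hγ.2 ⟨i, _, hi, hneg, ?_⟩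
    rw [root_reflectionPerm, reflection_apply_self, hroot, h, one_smul]
    abel
  · show 0 < f (P.root (P.reflectionPerm γ i))
    rw [hroot, h, map_sub, map_smul, smul_eq_mul]
    linarith
  · exact absurd h hne
  · have := congrArg f h
    rw [map_neg] at this
    linarith

theorem exists_isSimple_pairing_eq_one [Finite ι] (hSL : ∀ i j, P.pairing i j = P.pairing j i)
    {k : ι} (hk : Pos P f k) (hns : ¬ IsSimple P f k) :
    ∃ γ, IsSimple P f γ ∧ P.pairing k γ = 1 := by
  obtain ⟨L, hL, hsum⟩ := exists_sum_isSimple_eq_root hk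
  have hsum_pairing : (L.map fun γ => P.pairing γ k).sum = 2 := by
    rw [← P.pairing_same k, ← root_coroot'_eq_pairing, ← hsum, map_list_sum, List.map_map]
    rfl
  obtain ⟨γ, hγL, hpos⟩ := List.exists_lt_of_sum_lt (l := L) (fun _ => (0 : ℝ))
    (fun γ => P.pairing γ k) (by simp [hsum_pairing])
  have hγ := hL γ hγL
  refine ⟨γ, hγ, hSL k γ ▸ ?_⟩
  rcases P.pairing_cases_of_pairing_symm hSL γ k with h | h | h | h | h
  · simp [h] at hpos
  · exact h
  · norm_num [h] at hpos
  · exact absurd (h ▸ hγ) hns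
  · have := congrArg f h
    rw [map_neg] at this
    linarith [show 0 < f (P.root γ) from hγ.1, show 0 < f (P.root k) from hk]

theorem tworho_reflectionPerm_of_isSimple [Fintype ι] (hreg : Regular P f)
    (hSL : ∀ i j, P.pairing i j = P.pairing j i) {γ : ι} (hγ : IsSimple P f γ) (m : ι) :
    tworho P f (P.reflectionPerm γ m) = tworho P f m - 2 * P.pairing γ m := by
  classical
  set S := univ.filter fun i => 0 < f (P.root i)
  have hγS : γ ∈ S := by simpa [S] using show 0 < f (P.root γ) from hγ.1
  have hmaps : ∀ i ∈ S.erase γ, P.reflectionPerm γ i ∈ S.erase γ := by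
    intro i hi
    obtain ⟨hiγ, hi⟩ := by simpa [S] using hi
    have hpos : Pos P f (P.reflectionPerm γ i) := pos_reflectionPerm_of_isSimple hreg hSL hγ hi hiγ
    have hne : P.reflectionPerm γ i ≠ γ := fun h =>
      not_pos_reflectionPerm_self hγ.1 (by rwa [← P.reflectionPerm_self γ i, h] at hi)
    simpa [S, hne, Pos] using hpos
  have hsum :
      ∑ i ∈ S.erase γ, P.pairing (P.reflectionPerm γ i) m = ∑ i ∈ S.erase γ, P.pairing i m :=
    sum_equiv (P.reflectionPerm γ)
      (fun i => ⟨hmaps i, fun h => by simpa using hmaps _ h⟩) (fun _ _ => rfl)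
  simp only [tworho, ← sum_filter]
  rw [← add_sum_erase S _ hγS, ← add_sum_erase S _ hγS]
  simp only [pairing_reflectionPerm, hsum, pairing_reflectionPerm_self_left]
  ring

theorem tworho_of_isSimple [Fintype ι] (hreg : Regular P f)
    (hSL : ∀ i j, P.pairing i j = P.pairing j i) {γ : ι} (hγ : IsSimple P f γ) :
    tworho P f γ = 2 := by
  have := tworho_reflectionPerm_of_isSimple hreg hSL hγ γ
  rw [tworho_reflectionPerm_self, P.pairing_same] at this
  linarith

theorem exists_wrd_refl_length_eq_tworho_sub_one [Fintype ι] (hreg : Regular P f)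
    (hSL : ∀ i j, P.pairing i j = P.pairing j i) (k : ι) (hk : Pos P f k) :
    ∃ l, Wrd P f (refl P k) l ∧ (l.length : ℝ) = tworho P f k - 1 := by
  induction k, hk using pos_induction with
  | ih k hk ih =>
    by_cases hs : IsSimple P f k
    · refine ⟨[k], ⟨by simpa using hs, by simp⟩, ?_⟩
      rw [tworho_of_isSimple hreg hSL hs]
      norm_num
    obtain ⟨γ, hγ, hkγ⟩ := exists_isSimple_pairing_eq_one hSL hk hs
    set b := P.reflectionPerm γ k with hb
    have hbpos : Pos P f b := pos_reflectionPerm_of_isSimple hreg hSL hγ hk fun h => hs (h ▸ hγ)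
    have hbk : f (P.root b) < f (P.root k) := by
      rw [hb, root_reflectionPerm, reflection_apply_root, hkγ, one_smul, map_sub]
      linarith [show 0 < f (P.root γ) from hγ.1]
    obtain ⟨l, ⟨hls, hlprod⟩, hllen⟩ := ih b hbpos hbk
    have hγb : P.pairing γ b = -1 := by
      rw [hSL, hb, ← pairing_reflectionPerm, pairing_reflectionPerm_self_right, hkγ]
    have htwo : tworho P f k = tworho P f b + 2 := by
      have := tworho_reflectionPerm_of_isSimple hreg hSL hγ b
      rw [hb, reflectionPerm_self, ← hb, hγb] at this
      linarith
    refine ⟨γ :: (l ++ [γ]), ⟨?_, ?_⟩, ?_⟩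
    · intro i hi
      simp only [List.mem_cons, List.mem_append, List.not_mem_nil, or_false] at hi
      rcases hi with rfl | hi | rfl
      exacts [hγ, hls i hi, hγ]
    · rw [← P.reflectionPerm_self γ k, ← hb]
      simp [refl, hlprod, reflection_reflectionPerm, mul_assoc]
    · simp only [List.length_cons, List.length_append, List.length_nil]
      push_cast
      linarith

theorem card_inversions_mul_refl_le [Fintype ι] (hreg : Regular P f)
    (hSL : ∀ i j, P.pairing i j = P.pairing j i) {γ : ι} (hγ : IsSimple P f γ) (w : V ≃ₗ[ℝ] V) :
    #(inversions P f (w * refl P γ)) ≤ #(inversions P f w) + 1 := by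
  classical
  have hsub : inversions P f (w * refl P γ) ⊆
      insert γ ((inversions P f w).image (P.reflectionPerm γ)) := by
    intro i hi
    rw [mem_inversions] at hi
    rw [mem_insert, mem_image]
    refine or_iff_not_imp_left.mpr fun hiγ => ⟨P.reflectionPerm γ i, ?_, reflectionPerm_self _ _ _⟩
    exact mem_inversions.mpr
      ⟨pos_reflectionPerm_of_isSimple hreg hSL hγ hi.1 hiγ, by simpa [refl] using hi.2⟩
  calc #(inversions P f (w * refl P γ))
      ≤ #(insert γ ((inversions P f w).image (P.reflectionPerm γ))) := card_le_card hsub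
    _ ≤ #((inversions P f w).image (P.reflectionPerm γ)) + 1 := card_insert_le _ _
    _ ≤ #(inversions P f w) + 1 := by grw [card_image_le]

theorem card_inversions_le_length [Fintype ι] (hreg : Regular P f)
    (hSL : ∀ i j, P.pairing i j = P.pairing j i) {w : V ≃ₗ[ℝ] V} {l : List ι} (hl : Wrd P f w l) :
    #(inversions P f w) ≤ l.length := by
  obtain ⟨hls, rfl⟩ := hl
  induction l using List.reverseRecOn with
  | nil => simp [inversions_one]
  | append_singleton l γ ih =>
    simp only [List.map_append, List.map_singleton, List.prod_append, List.prod_singleton,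
      List.length_append, List.length_singleton]
    have hγ : IsSimple P f γ := hls γ (by simp)
    grw [card_inversions_mul_refl_le hreg hSL hγ, ih fun i hi => hls i (by simp [hi])]

theorem card_inversions_le_len [Fintype ι] (hreg : Regular P f)
    (hSL : ∀ i j, P.pairing i j = P.pairing j i) {w : V ≃ₗ[ℝ] V} (hw : InW P f w) :
    #(inversions P f w) ≤ len P f w := by
  obtain ⟨l, hl⟩ := hw
  obtain ⟨l', hl', hlen⟩ :=
    Nat.sInf_mem (s := {n | ∃ l, Wrd P f w l ∧ l.length = n}) ⟨_, l, hl, rfl⟩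
  rw [len, ← hlen]
  exact card_inversions_le_length hreg hSL hl'

theorem pairing_eq_one_of_mem_inversions_refl [Fintype ι]
    (hSL : ∀ i j, P.pairing i j = P.pairing j i) {i k : ι} (hk : Pos P f k)
    (hi : i ∈ inversions P f (refl P k)) (hik : i ≠ k) : P.pairing i k = 1 := by
  rw [mem_inversions, refl, reflection_apply_root, map_sub, map_smul, smul_eq_mul] at hi
  have hkpos : 0 < f (P.root k) := hk
  rcases P.pairing_cases_of_pairing_symm hSL i k with h | h | h | h | h
  · rw [h] at hi; linarith
  · exact h
  · rw [h] at hi; linarith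
  · exact absurd h hik
  · have := congrArg f h
    rw [map_neg] at this
    linarith

theorem tworho_eq_card_inversions_refl_add_one [Fintype ι] (hreg : Regular P f)
    (hSL : ∀ i j, P.pairing i j = P.pairing j i) {k : ι} (hk : Pos P f k) :
    tworho P f k = #(inversions P f (refl P k)) + 1 := by
  classical
  have hkinv : k ∈ inversions P f (refl P k) := by
    simpa [refl] using show 0 < f (P.root k) from hk
  have hinv : ∀ i ∈ inversions P f (refl P k), P.pairing i k = 1 + if i = k then 1 else 0 := by
    intro i hi
    split_ifs with hik
    · rw [hik, P.pairing_same]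
      norm_num
    · rw [pairing_eq_one_of_mem_inversions_refl hSL hk hi hik, add_zero]
  rw [tworho, ← sum_filter, ← sum_filter_add_sum_filter_not _ fun i => f (refl P k (P.root i)) < 0,
    filter_filter, filter_filter, sum_pairing_noninversions_refl_eq_zero hreg, add_zero]
  change ∑ i ∈ inversions P f (refl P k), P.pairing i k = _
  rw [sum_congr rfl hinv, sum_add_distrib, sum_ite_eq', if_pos hkinv]
  simp

end SimplyLaced

end QBG

namespace QBG

variable {ι V V' : Type*} [Fintype ι] [AddCommGroup V] [Module ℝ V]
  [AddCommGroup V'] [Module ℝ V']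

variable (P : RootSystem ι ℝ V V') (f : V →ₗ[ℝ] ℝ)

theorem reflection_length_eq_of_simply_laced (hP : P.IsCrystallographic) (hreg : Regular P f)
    (hSL : ∀ i j : ι, P.pairing i j = P.pairing j i) (k : ι) (hk : Pos P f k) :
    (len P f (refl P k) : ℝ) = tworho P f k - 1 := by
  obtain ⟨l, hl, hlen⟩ := exists_wrd_refl_length_eq_tworho_sub_one hreg hSL k hk
  have hle : (len P f (refl P k) : ℝ) ≤ l.length := by exact_mod_cast len_le_length hl
  have hge : (#(inversions P f (refl P k)) : ℝ) ≤ len P f (refl P k) := by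
    exact_mod_cast card_inversions_le_len hreg hSL ⟨l, hl⟩
  linarith [tworho_eq_card_inversions_refl_add_one hreg hSL hk]

end QBG
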